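/- Let p : ℕ → [1,∞) be such that C := ∏_{k=1}^∞ 2^{1 − 1/p(k)} converges to a finite value (equivalently, ∑_k (1 − 1/p(k)) < ∞). Then for every real sequence x one has Φ_p(x) ≤ ∑_{n=1}^∞ |x_n| ≤ C · Φ_p(x). In particular ℓ^{p(·)} and ℓ¹ coincide as sets and the identity map is an isomorphism with norm bounds 1 and C. -/

import Mathlib

open scoped ENNReal

/-- `t ⊞_p s`: for `p < ∞`, `(t^p + s^p)^(1/p)`; for `p = ∞`, `max t s`. -/
noncomputable def boxPlus (p : ℝ≥0∞) (t s : ℝ) : ℝ :=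
  if p = ∞ then max t s else (t ^ p.toReal + s ^ p.toReal) ^ (1 / p.toReal)

/-- The recursively defined seminorms `|||x|||_(k)` (0-indexed). -/
noncomputable def seqNorm (p : ℕ → ℝ≥0∞) (x : ℕ → ℝ) : ℕ → ℝ
  | 0 => boxPlus (p 0) |x 0| |x 1|
  | k + 1 => boxPlus (p (k + 1)) (seqNorm p x k) |x (k + 2)|

/-- `Φ_p(x) = lim_k |||x|||_(k)`, as the supremum of the nondecreasing sequence. -/
noncomputable def Phi (p : ℕ → ℝ≥0∞) (x : ℕ → ℝ) : ℝ≥0∞ :=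
  ⨆ k, ENNReal.ofReal (seqNorm p x k)

/-- `x` is a bounded real sequence, i.e. `x ∈ ℓ^∞`. -/
def IsBddSeq (x : ℕ → ℝ) : Prop := ∃ M : ℝ, ∀ n, |x n| ≤ M

/-- Membership in the variable exponent space `ℓ^{p(·)}`. -/
def MemVLp (p : ℕ → ℝ≥0∞) (x : ℕ → ℝ) : Prop := IsBddSeq x ∧ Phi p x < ⊤

/-! Each step of the recursion is a two-term ℓ^{p(k)}-norm, which lies between
`2^{1/p(k) - 1} (t + s)` and `t + s`. Hence `|||x|||_(k)` is at most the partial sum of `|x n|`,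
and at least that partial sum divided by `∏_{j ≤ k} 2^{1 - 1/p(j)} ≤ 2^{∑_j (1 - 1/p(j))}`;
letting `k → ∞` gives both bounds. -/

open Finset

lemma Real.add_le_two_rpow_mul_rpow_add_rpow {a b q : ℝ} (ha : 0 ≤ a) (hb : 0 ≤ b)
    (hq : 1 ≤ q) : a + b ≤ 2 ^ (1 - 1 / q) * (a ^ q + b ^ q) ^ (1 / q) := by
  have hq0 : 0 < q := zero_lt_one.trans_le hq
  have hpow : (a + b) ^ q ≤ 2 ^ (q - 1) * (a ^ q + b ^ q) := by
    exact_mod_cast NNReal.rpow_add_le_mul_rpow_add_rpow ⟨a, ha⟩ ⟨b, hb⟩ hq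
  calc a + b = ((a + b) ^ q) ^ (1 / q) := by
        rw [← Real.rpow_mul (by positivity), mul_one_div_cancel hq0.ne', Real.rpow_one]
    _ ≤ (2 ^ (q - 1) * (a ^ q + b ^ q)) ^ (1 / q) := by gcongr
    _ = 2 ^ (1 - 1 / q) * (a ^ q + b ^ q) ^ (1 / q) := by
        rw [Real.mul_rpow (by positivity) (by positivity), ← Real.rpow_mul zero_le_two]
        congr 2
        field_simp

lemma ENNReal.toReal_inv_le_one {p : ℝ≥0∞} (hp : 1 ≤ p) : p⁻¹.toReal ≤ 1 := by
  simpa using ENNReal.toReal_mono ENNReal.one_ne_top (ENNReal.inv_le_one.2 hp)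

section boxPlus

variable {p : ℝ≥0∞} {t s : ℝ}

lemma boxPlus_nonneg (ht : 0 ≤ t) (hs : 0 ≤ s) : 0 ≤ boxPlus p t s := by
  unfold boxPlus
  split_ifs
  · exact ht.trans (le_max_left _ _)
  · positivity

lemma boxPlus_le_add (hp : 1 ≤ p) (ht : 0 ≤ t) (hs : 0 ≤ s) : boxPlus p t s ≤ t + s := by
  unfold boxPlus
  split_ifs with hp_top
  · exact max_le (le_add_of_nonneg_right hs) (le_add_of_nonneg_left ht)
  · exact Real.rpow_add_rpow_le_add ht hs (by simpa using ENNReal.toReal_mono hp_top hp)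

lemma add_le_boxPlus (hp : 1 ≤ p) (ht : 0 ≤ t) (hs : 0 ≤ s) :
    t + s ≤ 2 ^ (1 - p⁻¹.toReal) * boxPlus p t s := by
  unfold boxPlus
  split_ifs with hp_top
  · simp only [hp_top, ENNReal.inv_top, ENNReal.toReal_zero, sub_zero, Real.rpow_one]
    linarith [le_max_left t s, le_max_right t s]
  · rw [ENNReal.toReal_inv, ← one_div]
    exact Real.add_le_two_rpow_mul_rpow_add_rpow ht hs
      (by simpa using ENNReal.toReal_mono hp_top hp)

end boxPlus

section seqNorm

variable {p : ℕ → ℝ≥0∞} {x : ℕ → ℝ}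

lemma seqNorm_nonneg : ∀ k, 0 ≤ seqNorm p x k
  | 0 => boxPlus_nonneg (abs_nonneg _) (abs_nonneg _)
  | k + 1 => boxPlus_nonneg (seqNorm_nonneg k) (abs_nonneg _)

lemma seqNorm_le_sum_abs (hp : ∀ k, 1 ≤ p k) :
    ∀ k, seqNorm p x k ≤ ∑ i ∈ range (k + 2), |x i|
  | 0 => by
    simpa [seqNorm, sum_range_succ] using boxPlus_le_add (hp 0) (abs_nonneg (x 0)) (abs_nonneg _)
  | k + 1 => by
    rw [seqNorm, sum_range_succ]
    exact (boxPlus_le_add (hp _) (seqNorm_nonneg k) (abs_nonneg _)).trans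
      (add_le_add (seqNorm_le_sum_abs hp k) le_rfl)

lemma sum_abs_le_seqNorm (hp : ∀ k, 1 ≤ p k) :
    ∀ k, ∑ i ∈ range (k + 2), |x i| ≤
      2 ^ (∑ j ∈ range (k + 1), (1 - (p j)⁻¹.toReal)) * seqNorm p x k
  | 0 => by
    simpa [seqNorm, sum_range_succ] using add_le_boxPlus (hp 0) (abs_nonneg (x 0)) (abs_nonneg _)
  | k + 1 => by
    set c := (2 : ℝ) ^ (∑ j ∈ range (k + 1), (1 - (p j)⁻¹.toReal))
    have hc : 1 ≤ c := Real.one_le_rpow one_le_two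
      (sum_nonneg fun j _ => sub_nonneg.2 (ENNReal.toReal_inv_le_one (hp j)))
    calc ∑ i ∈ range (k + 3), |x i| = ∑ i ∈ range (k + 2), |x i| + |x (k + 2)| :=
          sum_range_succ _ _
      _ ≤ c * seqNorm p x k + c * |x (k + 2)| :=
          add_le_add (sum_abs_le_seqNorm hp k) (le_mul_of_one_le_left (abs_nonneg _) hc)
      _ = c * (seqNorm p x k + |x (k + 2)|) := by ring
      _ ≤ c * (2 ^ (1 - (p (k + 1))⁻¹.toReal) * seqNorm p x (k + 1)) := by
          gcongr
          exact add_le_boxPlus (hp _) (seqNorm_nonneg k) (abs_nonneg _)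
      _ = 2 ^ (∑ j ∈ range (k + 2), (1 - (p j)⁻¹.toReal)) * seqNorm p x (k + 1) := by
          rw [sum_range_succ _ (k + 1), Real.rpow_add two_pos, mul_assoc]

lemma Phi_le_tsum_abs (hp : ∀ k, 1 ≤ p k) (x : ℕ → ℝ) :
    Phi p x ≤ ∑' n, ENNReal.ofReal |x n| :=
  iSup_le fun k => calc
    ENNReal.ofReal (seqNorm p x k) ≤ ENNReal.ofReal (∑ i ∈ range (k + 2), |x i|) :=
      ENNReal.ofReal_le_ofReal (seqNorm_le_sum_abs hp k)
    _ = ∑ i ∈ range (k + 2), ENNReal.ofReal |x i| :=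
      ENNReal.ofReal_sum_of_nonneg fun _ _ => abs_nonneg _
    _ ≤ ∑' n, ENNReal.ofReal |x n| := ENNReal.sum_le_tsum _

lemma tsum_abs_le_mul_Phi (hp : ∀ k, 1 ≤ p k) (x : ℕ → ℝ) {C : ℝ}
    (hC : ∀ k, 2 ^ (∑ j ∈ range (k + 1), (1 - (p j)⁻¹.toReal)) ≤ C) :
    ∑' n, ENNReal.ofReal |x n| ≤ ENNReal.ofReal C * Phi p x := by
  rw [ENNReal.tsum_eq_iSup_nat' (Filter.tendsto_add_atTop_nat 2)]
  refine iSup_le fun k => ?_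
  calc ∑ i ∈ range (k + 2), ENNReal.ofReal |x i|
        = ENNReal.ofReal (∑ i ∈ range (k + 2), |x i|) :=
        (ENNReal.ofReal_sum_of_nonneg fun _ _ => abs_nonneg _).symm
    _ ≤ ENNReal.ofReal (C * seqNorm p x k) :=
        ENNReal.ofReal_le_ofReal <| (sum_abs_le_seqNorm hp k).trans <|
          mul_le_mul_of_nonneg_right (hC k) (seqNorm_nonneg k)
    _ = ENNReal.ofReal C * ENNReal.ofReal (seqNorm p x k) :=
        ENNReal.ofReal_mul' (seqNorm_nonneg k)
    _ ≤ ENNReal.ofReal C * Phi p x := by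
        gcongr
        exact le_iSup (fun k => ENNReal.ofReal (seqNorm p x k)) k

end seqNorm

/-- If `C = ∏ₖ 2^{1 - 1/p(k)}` is finite (equivalently `∑ₖ (1 - 1/p(k)) < ∞`,
so that `C = 2^{∑ₖ (1 - 1/p(k))}`), then
`Φ_p(x) ≤ ∑ₙ |xₙ| ≤ C · Φ_p(x)` for every real sequence `x`;
in particular `ℓ^{p(·)} = ℓ¹` with the identity an isomorphism. -/
theorem isomorphic_to_l1 (p : ℕ → ℝ) (hp : ∀ k, 1 ≤ p k)
    (hsum : Summable fun k => 1 - 1 / p k) (x : ℕ → ℝ) :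
    Phi (fun k => ENNReal.ofReal (p k)) x ≤ ∑' n, ENNReal.ofReal |x n| ∧
    ∑' n, ENNReal.ofReal |x n| ≤
      ENNReal.ofReal ((2 : ℝ) ^ (∑' k, (1 - 1 / p k))) *
        Phi (fun k => ENNReal.ofReal (p k)) x := by
  have hP : ∀ k, 1 ≤ ENNReal.ofReal (p k) := fun k => ENNReal.one_le_ofReal.2 (hp k)
  have hinv : ∀ k, (ENNReal.ofReal (p k))⁻¹.toReal = 1 / p k := fun k => by
    rw [ENNReal.toReal_inv, ENNReal.toReal_ofReal (zero_le_one.trans (hp k)), one_div]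
  refine ⟨Phi_le_tsum_abs hP x, tsum_abs_le_mul_Phi hP x fun k => ?_⟩
  simp only [hinv]
  refine Real.rpow_le_rpow_of_exponent_le one_le_two (hsum.sum_le_tsum _ fun j _ => ?_)
  rw [← hinv]
  exact sub_nonneg.2 (ENNReal.toReal_inv_le_one (hP j))
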